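/- Let L > 0, let f : ℝ^n → ℝ be L-smooth convex, and let (x_k) be the gradient descent sequence with initial point x₀ and step sizes η_i > 0 satisfying η_i ≤ 1/L for all i and a_k → ∞ as k → ∞. Then ∇f(x_k) converges to p⋆, the minimum-norm point of the closure of dom f*. -/

import Mathlib

open scoped InnerProductSpace
open Filter Topology

/-- Legendre–Fenchel conjugate of `f`, valued in `ℝ ∪ {∞}` (modeled in `EReal`). -/
noncomputable def fconj {n : ℕ} (f : EuclideanSpace ℝ (Fin n) → ℝ)
    (p : EuclideanSpace ℝ (Fin n)) : EReal :=
  ⨆ x : EuclideanSpace ℝ (Fin n), ((⟪p, x⟫_ℝ - f x : ℝ) : EReal)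

/-- Effective domain `dom f*` of the Legendre–Fenchel conjugate. -/
noncomputable def fconjDom {n : ℕ} (f : EuclideanSpace ℝ (Fin n) → ℝ) :
    Set (EuclideanSpace ℝ (Fin n)) := {p | fconj f p < ⊤}

/-- Dual divergence `D_f(x, p) = f x + f*(p) − ⟨p, x⟩` (meaningful for `p ∈ dom f*`). -/
noncomputable def dualDiv {n : ℕ} (f : EuclideanSpace ℝ (Fin n) → ℝ)
    (x p : EuclideanSpace ℝ (Fin n)) : ℝ :=
  f x + (fconj f p).toReal - ⟪p, x⟫_ℝ

section aux
variable {n : ℕ} {f : EuclideanSpace ℝ (Fin n) → ℝ}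


lemma line_hasDerivAt (hd : Differentiable ℝ f) (a b : EuclideanSpace ℝ (Fin n)) (t : ℝ) :
    HasDerivAt (fun s : ℝ => f (a + s • (b - a)))
      ⟪gradient f (a + t • (b - a)), b - a⟫_ℝ t := by
  have h1 : HasDerivAt (fun s : ℝ => a + s • (b - a)) (b - a) t := by
    simpa using ((hasDerivAt_id t).smul_const (b - a)).const_add a
  have h2 : HasFDerivAt f
      ((InnerProductSpace.toDual ℝ (EuclideanSpace ℝ (Fin n))) (gradient f (a + t • (b - a))))
      (a + t • (b - a)) := hasGradientAt_iff_hasFDerivAt.1 (hd _).hasGradientAt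
  have h3 := h2.comp_hasDerivAt t h1
  simpa [Function.comp_def] using h3

lemma convex_grad_ineq (hc : ConvexOn ℝ Set.univ f) (hd : Differentiable ℝ f)
    (a b : EuclideanSpace ℝ (Fin n)) :
    f a + ⟪gradient f a, b - a⟫_ℝ ≤ f b := by
  set φ : ℝ → ℝ := fun t => f (a + t • (b - a)) with hφ
  have hφc : ConvexOn ℝ Set.univ φ := by
    have h := hc.comp_affineMap (AffineMap.lineMap a b : ℝ →ᵃ[ℝ] EuclideanSpace ℝ (Fin n))
    have : (f ∘ (AffineMap.lineMap a b : ℝ →ᵃ[ℝ] EuclideanSpace ℝ (Fin n))) = φ := by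
      funext t
      simp [φ, AffineMap.lineMap_apply, add_comm]
    rw [this] at h
    simpa using h
  have hslope := hφc.le_slope_of_hasDerivAt (Set.mem_univ (0:ℝ)) (Set.mem_univ (1:ℝ))
    one_pos (by simpa using line_hasDerivAt hd a b 0)
  have h0 : φ 0 = f a := by simp [φ]
  have h1 : φ 1 = f b := by simp [φ]
  rw [slope_def_field, h0, h1] at hslope
  norm_num at hslope
  have hin : ⟪gradient f a, b - a⟫_ℝ = (fderiv ℝ f a) b - (fderiv ℝ f a) a := by
    simp [PiLp.inner_apply]
  rw [hin]
  linarith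

lemma descent_lemma {L : ℝ} (hL : 0 < L) (hd : Differentiable ℝ f)
    (hlip : LipschitzWith (Real.toNNReal L) (fun x => gradient f x))
    (a b : EuclideanSpace ℝ (Fin n)) :
    f b ≤ f a + ⟪gradient f a, b - a⟫_ℝ + L / 2 * ‖b - a‖ ^ 2 := by
  set ψ : ℝ → ℝ := fun t => ⟪gradient f (a + t • (b - a)), b - a⟫_ℝ with hψ
  have hgc : Continuous (fun y => gradient f y) := hlip.continuous
  have hψcont : Continuous ψ := by
    apply Continuous.inner
    · exact hgc.comp (by continuity)
    · exact continuous_const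
  have hFTC : ∫ t in (0:ℝ)..1, ψ t = f b - f a := by
    have h := intervalIntegral.integral_eq_sub_of_hasDerivAt
      (f := fun s : ℝ => f (a + s • (b - a))) (f' := ψ)
      (fun t _ => line_hasDerivAt hd a b t) (hψcont.intervalIntegrable 0 1)
    simpa using h
  have hbound : ∀ t ∈ Set.Icc (0:ℝ) 1, ψ t ≤ ψ 0 + (L * ‖b - a‖ ^ 2) * t := by
    intro t ht
    have h1 : ψ t - ψ 0 = ⟪gradient f (a + t • (b - a)) - gradient f (a + (0:ℝ) • (b - a)), b - a⟫_ℝ := by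
      rw [inner_sub_left]
    have h2 : ψ t - ψ 0 ≤ ‖gradient f (a + t • (b - a)) - gradient f (a + (0:ℝ) • (b - a))‖ * ‖b - a‖ :=
      h1 ▸ real_inner_le_norm _ _
    have h3 : ‖gradient f (a + t • (b - a)) - gradient f (a + (0:ℝ) • (b - a))‖
        ≤ L * (t * ‖b - a‖) := by
      have h4 := hlip.dist_le_mul (a + t • (b - a)) (a + (0:ℝ) • (b - a))
      simp only [dist_eq_norm] at h4
      have h5 : (a + t • (b - a)) - (a + (0:ℝ) • (b - a)) = t • (b - a) := by
        simp
      rw [h5] at h4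
      have h6 : ‖t • (b - a)‖ = t * ‖b - a‖ := by
        rw [norm_smul, Real.norm_eq_abs, abs_of_nonneg ht.1]
      rw [h6] at h4
      calc _ ≤ (Real.toNNReal L : ℝ) * (t * ‖b - a‖) := h4
        _ = L * (t * ‖b - a‖) := by rw [Real.coe_toNNReal L hL.le]
    nlinarith [norm_nonneg (b - a), ht.1]
  have hint : ∫ t in (0:ℝ)..1, ψ t ≤ ∫ t in (0:ℝ)..1, (ψ 0 + (L * ‖b - a‖ ^ 2) * t) := by
    have hgint : IntervalIntegrable (fun t : ℝ => ψ 0 + (L * ‖b - a‖ ^ 2) * t)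
        MeasureTheory.volume 0 1 := by
      apply Continuous.intervalIntegrable
      fun_prop
    exact intervalIntegral.integral_mono_on zero_le_one (hψcont.intervalIntegrable 0 1)
      hgint hbound
  have hval : ∫ t in (0:ℝ)..1, (ψ 0 + (L * ‖b - a‖ ^ 2) * t) = ψ 0 + L / 2 * ‖b - a‖ ^ 2 := by
    have hgint2 : IntervalIntegrable (fun t : ℝ => (L * ‖b - a‖ ^ 2) * t)
        MeasureTheory.volume 0 1 := by
      apply Continuous.intervalIntegrable
      fun_prop
    rw [intervalIntegral.integral_add (intervalIntegrable_const) hgint2,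
      intervalIntegral.integral_const, intervalIntegral.integral_const_mul,
      integral_id]
    norm_num
    ring
  have hψ0 : ψ 0 = ⟪gradient f a, b - a⟫_ℝ := by simp [ψ]
  rw [hFTC] at hint
  rw [hval, hψ0] at hint
  linarith

lemma smooth_lower {L : ℝ} (hL : 0 < L) (hc : ConvexOn ℝ Set.univ f)
    (hd : Differentiable ℝ f)
    (hlip : LipschitzWith (Real.toNNReal L) (fun x => gradient f x))
    (a b : EuclideanSpace ℝ (Fin n)) :
    f a + ⟪gradient f a, b - a⟫_ℝ + 1 / (2 * L) * ‖gradient f b - gradient f a‖ ^ 2 ≤ f b := by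
  set ga := gradient f a with hga
  set gb := gradient f b with hgb
  set c : EuclideanSpace ℝ (Fin n) := b - (1 / L) • (gb - ga) with hcdef
  have h1 := convex_grad_ineq hc hd a c
  have h2 := descent_lemma hL hd hlip b c
  have e1 : ⟪ga, c - a⟫_ℝ = ⟪ga, b - a⟫_ℝ - (1 / L) * ⟪ga, gb - ga⟫_ℝ := by
    have : c - a = (b - a) - (1 / L) • (gb - ga) := by rw [hcdef]; abel
    rw [this, inner_sub_right, real_inner_smul_right]
  have e2 : ⟪gb, c - b⟫_ℝ = -(1 / L) * ⟪gb, gb - ga⟫_ℝ := by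
    have : c - b = -((1 / L) • (gb - ga)) := by rw [hcdef]; abel
    rw [this, inner_neg_right, real_inner_smul_right]
    ring
  have e3 : ‖c - b‖ ^ 2 = (1 / L) ^ 2 * ‖gb - ga‖ ^ 2 := by
    have : c - b = -((1 / L) • (gb - ga)) := by rw [hcdef]; abel
    rw [this, norm_neg, norm_smul, Real.norm_eq_abs, mul_pow, sq_abs]
  have e4 : ⟪gb, gb - ga⟫_ℝ - ⟪ga, gb - ga⟫_ℝ = ‖gb - ga‖ ^ 2 := by
    rw [← inner_sub_left, real_inner_self_eq_norm_sq]
  rw [e1] at h1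
  rw [e2, e3] at h2
  have hL' : L ≠ 0 := ne_of_gt hL
  have key : L / 2 * ((1 / L) ^ 2 * ‖gb - ga‖ ^ 2) = 1 / (2 * L) * ‖gb - ga‖ ^ 2 := by
    field_simp
  rw [key] at h2
  have e5 : 1 / L * ⟪gb, gb - ga⟫_ℝ - 1 / L * ⟪ga, gb - ga⟫_ℝ = 1 / L * ‖gb - ga‖ ^ 2 := by
    rw [← mul_sub, e4]
  have e6 : 1 / L * ‖gb - ga‖ ^ 2 = 2 * (1 / (2 * L) * ‖gb - ga‖ ^ 2) := by
    field_simp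
  linarith [h1, h2]


lemma le_fconj (p x : EuclideanSpace ℝ (Fin n)) :
    ((⟪p, x⟫_ℝ - f x : ℝ) : EReal) ≤ fconj f p :=
  le_iSup (fun x => ((⟪p, x⟫_ℝ - f x : ℝ) : EReal)) x

lemma fconj_ne_bot (p : EuclideanSpace ℝ (Fin n)) : fconj f p ≠ ⊥ := by
  intro h
  have h1 := le_fconj (f := f) p 0
  rw [h, le_bot_iff] at h1
  exact EReal.coe_ne_bot _ h1

lemma fenchel_young (hp : fconj f p ≠ ⊤) (x : EuclideanSpace ℝ (Fin n)) :
    ⟪p, x⟫_ℝ - f x ≤ (fconj f p).toReal := by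
  have h := le_fconj (f := f) p x
  rw [← EReal.coe_toReal hp (fconj_ne_bot p)] at h
  exact_mod_cast h

lemma grad_mem_dom (hc : ConvexOn ℝ Set.univ f) (hd : Differentiable ℝ f)
    (x : EuclideanSpace ℝ (Fin n)) : gradient f x ∈ fconjDom f := by
  have hle : fconj f (gradient f x) ≤ ((⟪gradient f x, x⟫_ℝ - f x : ℝ) : EReal) := by
    apply iSup_le
    intro y
    apply EReal.coe_le_coe_iff.2
    have h := convex_grad_ineq hc hd x y
    rw [inner_sub_right] at h
    linarith
  exact lt_of_le_of_lt hle (EReal.coe_lt_top _)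

lemma dom_convex : Convex ℝ (fconjDom f) := by
  intro p hp q hq a b ha hb hab
  have hple : ∀ y, ⟪p, y⟫_ℝ - f y ≤ (fconj f p).toReal := fenchel_young (LT.lt.ne hp)
  have hqle : ∀ y, ⟪q, y⟫_ℝ - f y ≤ (fconj f q).toReal := fenchel_young (LT.lt.ne hq)
  have hle : fconj f (a • p + b • q) ≤
      ((a * (fconj f p).toReal + b * (fconj f q).toReal : ℝ) : EReal) := by
    apply iSup_le
    intro y
    apply EReal.coe_le_coe_iff.2
    have hi : ⟪a • p + b • q, y⟫_ℝ = a * ⟪p, y⟫_ℝ + b * ⟪q, y⟫_ℝ := by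
      rw [inner_add_left, real_inner_smul_left, real_inner_smul_left]
    have h1 := mul_le_mul_of_nonneg_left (hple y) ha
    have h2 := mul_le_mul_of_nonneg_left (hqle y) hb
    have hfy : a * f y + b * f y = f y := by rw [← add_mul, hab, one_mul]
    nlinarith [h1, h2]
  exact lt_of_le_of_lt hle (EReal.coe_lt_top _)

end aux

/-- `f` is `L`-smooth convex: convex, differentiable, with `L`-Lipschitz gradient. -/
def LSmoothConvex {n : ℕ} (L : ℝ) (f : EuclideanSpace ℝ (Fin n) → ℝ) : Prop :=
  ConvexOn ℝ Set.univ f ∧ Differentiable ℝ f ∧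
    LipschitzWith (Real.toNNReal L) (fun x => gradient f x)

set_option maxHeartbeats 1000000 in
/-- with `η_i ≤ 1/L` and `a_k → ∞`, the gradients `∇f(x_k)` converge to
the minimum-norm point `p⋆` of the closure of `dom f*`. -/
theorem stmt2 {n : ℕ} (hn : 1 ≤ n) (L : ℝ) (hL : 0 < L)
    (f : EuclideanSpace ℝ (Fin n) → ℝ) (hf : LSmoothConvex L f)
    (x₀ : EuclideanSpace ℝ (Fin n)) (η : ℕ → ℝ) (hη : ∀ i, 0 < η i)
    (x : ℕ → EuclideanSpace ℝ (Fin n)) (hx0 : x 0 = x₀)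
    (hstep : ∀ k, x (k + 1) = x k - η k • gradient f (x k))
    (hηL : ∀ i, η i ≤ 1 / L)
    (ha : Tendsto (fun k => ∑ i ∈ Finset.range k, η i) atTop atTop)
    (pstar : EuclideanSpace ℝ (Fin n))
    (hps : pstar ∈ closure (fconjDom f))
    (hmin : ∀ q ∈ closure (fconjDom f), ‖pstar‖ ≤ ‖q‖) :
    Tendsto (fun k => gradient f (x k)) atTop (nhds pstar) := by
  have hf' : ConvexOn ℝ Set.univ f ∧ Differentiable ℝ f ∧
      LipschitzWith (Real.toNNReal L) (fun x => gradient f x) := hf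
  obtain ⟨hc, hd, hlip⟩ := hf'
  have hLinv : (0:ℝ) < 1 / L := by positivity
  have hc2 : (1:ℝ) / L = 2 * (1 / (2 * L)) := by field_simp
  have hxd : ∀ k, x k - x (k + 1) = η k • gradient f (x k) := by
    intro k; rw [hstep k]; abel
  have hxd' : ∀ k, x (k + 1) - x k = -(η k • gradient f (x k)) := by
    intro k; rw [hstep k]; abel
  have hEa : ∀ k, f (x k) - η k * ‖gradient f (x k)‖ ^ 2
      + 1 / (2 * L) * ‖gradient f (x (k+1)) - gradient f (x k)‖ ^ 2 ≤ f (x (k+1)) := by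
    intro k
    have h := smooth_lower hL hc hd hlip (x k) (x (k + 1))
    rw [hxd' k, inner_neg_right, real_inner_smul_right, real_inner_self_eq_norm_sq] at h
    linarith
  have hEb : ∀ k, f (x (k+1)) + η k * ⟪gradient f (x (k+1)), gradient f (x k)⟫_ℝ
      + 1 / (2 * L) * ‖gradient f (x k) - gradient f (x (k+1))‖ ^ 2 ≤ f (x k) := by
    intro k
    have h := smooth_lower hL hc hd hlip (x (k + 1)) (x k)
    rw [hxd k, real_inner_smul_right] at h
    linarith
  have hmono : ∀ k, ‖gradient f (x (k+1))‖ ^ 2 ≤ ‖gradient f (x k)‖ ^ 2 := by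
    intro k
    have h1 := hEa k
    have h2 := hEb k
    have hid : ‖gradient f (x k) - gradient f (x (k+1))‖ ^ 2
        = ‖gradient f (x k)‖ ^ 2 - 2 * ⟪gradient f (x k), gradient f (x (k+1))⟫_ℝ
          + ‖gradient f (x (k+1))‖ ^ 2 := norm_sub_sq_real _ _
    have hrev : ‖gradient f (x (k+1)) - gradient f (x k)‖
        = ‖gradient f (x k) - gradient f (x (k+1))‖ := norm_sub_rev _ _
    have hcomm : ⟪gradient f (x (k+1)), gradient f (x k)⟫_ℝ
        = ⟪gradient f (x k), gradient f (x (k+1))⟫_ℝ := real_inner_comm _ _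
    rw [hrev] at h1
    rw [hcomm] at h2
    have hη2c : η k ≤ 2 * (1 / (2 * L)) := by rw [← hc2]; exact hηL k
    nlinarith [h1, h2, hid, hη k, sq_nonneg ‖gradient f (x k) - gradient f (x (k+1))‖,
      mul_le_mul_of_nonneg_right hη2c (sq_nonneg ‖gradient f (x k) - gradient f (x (k+1))‖)]
  have hanti : Antitone (fun k => ‖gradient f (x k)‖ ^ 2) := antitone_nat_of_succ_le hmono
  have hbdd : BddBelow (Set.range fun k => ‖gradient f (x k)‖ ^ 2) := by
    refine ⟨0, ?_⟩
    rintro y ⟨k, rfl⟩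
    positivity
  set r2 := ⨅ k, ‖gradient f (x k)‖ ^ 2 with hr2def
  have htends : Tendsto (fun k => ‖gradient f (x k)‖ ^ 2) atTop (𝓝 r2) :=
    tendsto_atTop_ciInf hanti hbdd
  have hr2le : ∀ k, r2 ≤ ‖gradient f (x k)‖ ^ 2 := fun k => ciInf_le hbdd k
  have hr2nonneg : 0 ≤ r2 := le_ciInf fun k => by positivity
  set r := Real.sqrt r2 with hrdef
  have hrsq : r ^ 2 = r2 := Real.sq_sqrt hr2nonneg
  have hrnn : 0 ≤ r := Real.sqrt_nonneg _
  have hnormt : Tendsto (fun k => ‖gradient f (x k)‖) atTop (𝓝 r) := by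
    have h := htends.sqrt
    have heq : (fun k => Real.sqrt (‖gradient f (x k)‖ ^ 2))
        = fun k => ‖gradient f (x k)‖ := funext fun k => Real.sqrt_sq (norm_nonneg _)
    rwa [heq] at h
  -- descent with r2
  have hdesc : ∀ k, f (x (k+1)) ≤ f (x k) - η k * r2 := by
    intro k
    have h2 := hEb k
    have hid : ‖gradient f (x k) - gradient f (x (k+1))‖ ^ 2
        = ‖gradient f (x k)‖ ^ 2 - 2 * ⟪gradient f (x k), gradient f (x (k+1))⟫_ℝ
          + ‖gradient f (x (k+1))‖ ^ 2 := norm_sub_sq_real _ _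
    have hcomm : ⟪gradient f (x (k+1)), gradient f (x k)⟫_ℝ
        = ⟪gradient f (x k), gradient f (x (k+1))⟫_ℝ := real_inner_comm _ _
    rw [hcomm] at h2
    have hη2c : η k ≤ 2 * (1 / (2 * L)) := by rw [← hc2]; exact hηL k
    nlinarith [h2, hid, hη k, hr2le k, hr2le (k+1),
      sq_nonneg ‖gradient f (x k) - gradient f (x (k+1))‖,
      mul_le_mul_of_nonneg_right hη2c (sq_nonneg ‖gradient f (x k) - gradient f (x (k+1))‖)]
  have hip : ∀ p : EuclideanSpace ℝ (Fin n), ∀ k,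
      ⟪p, x (k+1)⟫_ℝ = ⟪p, x k⟫_ℝ - η k * ⟪p, gradient f (x k)⟫_ℝ := by
    intro p k
    rw [hstep k, inner_sub_right, real_inner_smul_right]
  have hVstep : ∀ p : EuclideanSpace ℝ (Fin n), ∀ k,
      dualDiv f (x (k+1)) p ≤ dualDiv f (x k) p
        - η k * (r2 - ⟪p, gradient f (x k)⟫_ℝ) := by
    intro p k
    simp only [dualDiv]
    rw [hip p k]
    linarith [hdesc k]
  have hVnn : ∀ p : EuclideanSpace ℝ (Fin n), fconj f p ≠ ⊤ → ∀ k,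
      0 ≤ dualDiv f (x k) p := by
    intro p hp k
    have := fenchel_young hp (x k)
    simp only [dualDiv]
    linarith
  have hsum : ∀ p : EuclideanSpace ℝ (Fin n), fconj f p ≠ ⊤ → ∀ K,
      ∑ k ∈ Finset.range K, η k * (r2 - ⟪p, gradient f (x k)⟫_ℝ) ≤ dualDiv f (x 0) p := by
    intro p hp K
    have h : ∀ K, ∑ k ∈ Finset.range K, η k * (r2 - ⟪p, gradient f (x k)⟫_ℝ)
        + dualDiv f (x K) p ≤ dualDiv f (x 0) p := by
      intro K
      induction K with
      | zero => simp
      | succ K ih =>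
        rw [Finset.sum_range_succ]
        have := hVstep p K
        linarith
    have h1 := h K
    have h2 := hVnn p hp K
    linarith
  have hrp : ∀ p ∈ fconjDom f, r2 ≤ r * ‖p‖ := by
    intro p hp
    have hptop : fconj f p ≠ ⊤ := LT.lt.ne hp
    by_contra hcon
    push_neg at hcon
    have hb : ‖p‖ * r < (r * ‖p‖ + r2) / 2 := by rw [mul_comm]; linarith
    have hev : ∀ᶠ k in atTop, ‖p‖ * ‖gradient f (x k)‖ < (r * ‖p‖ + r2) / 2 :=
      (hnormt.const_mul ‖p‖).eventually_lt_const hb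
    obtain ⟨N, hN⟩ := eventually_atTop.1 hev
    set ε := (r2 - r * ‖p‖) / 2 with hεdef
    have hεpos : 0 < ε := by rw [hεdef]; linarith
    have hterm : ∀ k, N ≤ k → ε * η k ≤ η k * (r2 - ⟪p, gradient f (x k)⟫_ℝ) := by
      intro k hk
      have h1 : ⟪p, gradient f (x k)⟫_ℝ ≤ ‖p‖ * ‖gradient f (x k)‖ := real_inner_le_norm _ _
      have h2 := hN k hk
      have h3 : ε ≤ r2 - ⟪p, gradient f (x k)⟫_ℝ := by rw [hεdef]; linarith
      calc ε * η k = η k * ε := mul_comm _ _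
        _ ≤ _ := mul_le_mul_of_nonneg_left h3 (hη k).le
    set C := ∑ k ∈ Finset.range N, η k * (r2 - ⟪p, gradient f (x k)⟫_ℝ) with hC
    have hKb : ∀ K, N ≤ K →
        C + ε * ((∑ i ∈ Finset.range K, η i) - ∑ i ∈ Finset.range N, η i)
          ≤ dualDiv f (x 0) p := by
      intro K hK
      have hsplit : ∑ k ∈ Finset.Ico N K, η k * (r2 - ⟪p, gradient f (x k)⟫_ℝ)
          = (∑ k ∈ Finset.range K, η k * (r2 - ⟪p, gradient f (x k)⟫_ℝ)) - C := by
        rw [hC]; exact Finset.sum_Ico_eq_sub _ hK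
      have hlow : ∑ k ∈ Finset.Ico N K, ε * η k
          ≤ ∑ k ∈ Finset.Ico N K, η k * (r2 - ⟪p, gradient f (x k)⟫_ℝ) :=
        Finset.sum_le_sum fun k hk => hterm k (Finset.mem_Ico.1 hk).1
      have heq : ∑ k ∈ Finset.Ico N K, ε * η k
          = ε * ((∑ i ∈ Finset.range K, η i) - ∑ i ∈ Finset.range N, η i) := by
        rw [← Finset.mul_sum, Finset.sum_Ico_eq_sub _ hK]
      have hs := hsum p hptop K
      linarith [hsplit ▸ hlow, heq]
    obtain ⟨K, hK1, hK2⟩ := ((ha.eventually_gt_atTop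
        ((dualDiv f (x 0) p - C) / ε + ∑ i ∈ Finset.range N, η i)).and
        (eventually_ge_atTop N)).exists
    have h5 := hKb K hK2
    have h6 : (dualDiv f (x 0) p - C) / ε
        < (∑ i ∈ Finset.range K, η i) - ∑ i ∈ Finset.range N, η i := by linarith
    have h7 : dualDiv f (x 0) p - C
        < ((∑ i ∈ Finset.range K, η i) - ∑ i ∈ Finset.range N, η i) * ε :=
      (div_lt_iff₀ hεpos).1 h6
    nlinarith [h5, h7]
  have hclosed : IsClosed {p : EuclideanSpace ℝ (Fin n) | r2 ≤ r * ‖p‖} :=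
    isClosed_le continuous_const (continuous_const.mul continuous_norm)
  have hr2ps : r2 ≤ r * ‖pstar‖ := closure_minimal hrp hclosed hps
  have hpsle : ∀ k, ‖pstar‖ ≤ ‖gradient f (x k)‖ :=
    fun k => hmin _ (subset_closure (grad_mem_dom hc hd (x k)))
  have hps2 : ‖pstar‖ ^ 2 ≤ r2 :=
    le_ciInf fun k => pow_le_pow_left₀ (norm_nonneg _) (hpsle k) 2
  have hreq : r2 ≤ ‖pstar‖ ^ 2 := by
    rcases eq_or_lt_of_le hrnn with h0 | hrpos
    · calc r2 = r ^ 2 := hrsq.symm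
        _ = 0 := by rw [← h0]; ring
        _ ≤ ‖pstar‖ ^ 2 := sq_nonneg _
    · have hrs : r ≤ ‖pstar‖ := by
        have h1 : r * r ≤ r * ‖pstar‖ := by nlinarith [hr2ps, hrsq]
        exact le_of_mul_le_mul_left h1 hrpos
      calc r2 = r ^ 2 := hrsq.symm
        _ ≤ ‖pstar‖ ^ 2 := pow_le_pow_left₀ hrnn hrs 2
  have req : r2 = ‖pstar‖ ^ 2 := le_antisymm hreq hps2
  -- variational characterization
  have vchar : ∀ q ∈ closure (fconjDom f), ‖pstar‖ ^ 2 ≤ ⟪pstar, q⟫_ℝ := by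
    intro q hq
    have hconv : Convex ℝ (closure (fconjDom f)) := (dom_convex).closure
    have hkey : ∀ t : ℝ, 0 < t → t ≤ 1 →
        0 ≤ 2 * ⟪pstar, q - pstar⟫_ℝ + t * ‖q - pstar‖ ^ 2 := by
      intro t ht0 ht1
      have hz : pstar + t • (q - pstar) ∈ closure (fconjDom f) :=
        hconv.add_smul_sub_mem hps hq ⟨ht0.le, ht1⟩
      have hm := hmin _ hz
      have hexp : ‖pstar + t • (q - pstar)‖ ^ 2
          = ‖pstar‖ ^ 2 + 2 * (t * ⟪pstar, q - pstar⟫_ℝ) + t ^ 2 * ‖q - pstar‖ ^ 2 := by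
        rw [norm_add_sq_real, real_inner_smul_right, norm_smul, Real.norm_eq_abs,
          mul_pow, sq_abs]
      have hm2 : ‖pstar‖ ^ 2 ≤ ‖pstar + t • (q - pstar)‖ ^ 2 :=
        pow_le_pow_left₀ (norm_nonneg _) hm 2
      rw [hexp] at hm2
      nlinarith [hm2, ht0]
    have hle : 0 ≤ ⟪pstar, q - pstar⟫_ℝ := by
      by_contra hneg
      push_neg at hneg
      set s := ‖q - pstar‖ ^ 2 with hsdef
      have hs : 0 ≤ s := sq_nonneg _
      have hipp : 0 < -⟪pstar, q - pstar⟫_ℝ := by linarith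
      set t := min 1 (-⟪pstar, q - pstar⟫_ℝ / (s + 1)) with htdef
      have ht0 : 0 < t := lt_min one_pos (by positivity)
      have ht1 : t ≤ 1 := min_le_left _ _
      have hkey2 := hkey t ht0 ht1
      have ht2 : t ≤ -⟪pstar, q - pstar⟫_ℝ / (s + 1) := min_le_right _ _
      have hts : t * s ≤ -⟪pstar, q - pstar⟫_ℝ / (s + 1) * s :=
        mul_le_mul_of_nonneg_right ht2 hs
      have hfrac : -⟪pstar, q - pstar⟫_ℝ / (s + 1) * s < -⟪pstar, q - pstar⟫_ℝ := by
        rw [div_mul_eq_mul_div, div_lt_iff₀ (by positivity : (0:ℝ) < s + 1)]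
        nlinarith [hipp, hs]
      nlinarith [hkey2]
    rw [inner_sub_right, real_inner_self_eq_norm_sq] at hle
    linarith
  have hub : ∀ k, ‖gradient f (x k) - pstar‖ ^ 2 ≤ ‖gradient f (x k)‖ ^ 2 - ‖pstar‖ ^ 2 := by
    intro k
    have h1 := vchar _ (subset_closure (grad_mem_dom hc hd (x k)))
    have h2 : ‖gradient f (x k) - pstar‖ ^ 2
        = ‖gradient f (x k)‖ ^ 2 - 2 * ⟪gradient f (x k), pstar⟫_ℝ + ‖pstar‖ ^ 2 :=
      norm_sub_sq_real _ _
    have h3 : ⟪pstar, gradient f (x k)⟫_ℝ = ⟪gradient f (x k), pstar⟫_ℝ :=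
      real_inner_comm _ _
    rw [h3] at h1
    linarith
  have hto0 : Tendsto (fun k => ‖gradient f (x k) - pstar‖ ^ 2) atTop (𝓝 0) := by
    have hU : Tendsto (fun k => ‖gradient f (x k)‖ ^ 2 - ‖pstar‖ ^ 2) atTop
        (𝓝 (r2 - ‖pstar‖ ^ 2)) := htends.sub_const _
    rw [show r2 - ‖pstar‖ ^ 2 = 0 by rw [req]; ring] at hU
    exact squeeze_zero (fun k => sq_nonneg _) hub hU
  have hto0' : Tendsto (fun k => ‖gradient f (x k) - pstar‖) atTop (𝓝 0) := by
    have h := hto0.sqrt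
    have heq : (fun k => Real.sqrt (‖gradient f (x k) - pstar‖ ^ 2))
        = fun k => ‖gradient f (x k) - pstar‖ := funext fun k => Real.sqrt_sq (norm_nonneg _)
    rw [heq] at h
    simpa using h
  exact tendsto_iff_norm_sub_tendsto_zero.2 hto0'
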